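/- arXiv:2403.00294 — 3 statements merged into one kernel-verified Lean document; each statement's English description precedes it below -/
import Mathlib

section
/- The mapping d(x,t) is continuously differentiable on ℝ^n × [0,1]; in particular, at each connection point t_ℓ (ℓ = 1, …, L−1) the partial derivative of d with respect to t exists, is continuous, and equals 0. -/
open Real Set Filter Topology

/-!
Clamp the argument of `u ↦ sin² (π u / 2)` to `[0, 1]`. The resulting `smoothStep` is still C¹ on
all of `ℝ`, because the derivative `(π / 2) sin (π u)` vanishes at both ends of the clamp. With it,
`d` agrees on `[0, 1]` with the single global formula
`F⁰ + ∑ₗ smoothStep ((s - t_{ℓ-1}) / (t_ℓ - t_{ℓ-1})) • (Fˡ - F^{ℓ-1})`: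
on `[t_ℓ, t_{ℓ-1}]` the earlier weights are `1`, the later ones `0`, and the sum telescopes.
That formula is C¹ in `(x, s)`, and at a node `t_ℓ` every weight sits at an end of its clamp,
where `smoothStep' = 0`.
-/

section ClampDeriv

variable {g g' : ℝ → ℝ} {a b : ℝ}

theorem hasDerivAt_comp_max_left (hg : ∀ u, HasDerivAt g (g' u) u) (ha : g' a = 0) (u : ℝ) :
    HasDerivAt (fun v => g (max a v)) (g' (max a u)) u := by
  rcases lt_trichotomy u a with hu | rfl | hu
  · rw [max_eq_left hu.le, ha]
    refine (hasDerivAt_const u (g a)).congr_of_eventuallyEq ?_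
    filter_upwards [Iio_mem_nhds hu] with v hv
    rw [max_eq_left hv.le]
  · rw [max_self, ha, ← hasDerivWithinAt_univ, ← Iic_union_Ici (a := u)]
    refine HasDerivWithinAt.union ?_ ?_
    · exact (hasDerivWithinAt_const u _ (g u)).congr (fun v hv => by rw [max_eq_left hv])
        (by rw [max_self])
    · exact (ha ▸ hg u).hasDerivWithinAt.congr (fun v hv => by rw [max_eq_right hv])
        (by rw [max_self])
  · rw [max_eq_right hu.le]
    refine (hg u).congr_of_eventuallyEq ?_
    filter_upwards [Ioi_mem_nhds hu] with v hv
    rw [max_eq_right hv.le]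

theorem hasDerivAt_comp_min_right (hg : ∀ u, HasDerivAt g (g' u) u) (hb : g' b = 0) (u : ℝ) :
    HasDerivAt (fun v => g (min v b)) (g' (min u b)) u := by
  rcases lt_trichotomy u b with hu | rfl | hu
  · rw [min_eq_left hu.le]
    refine (hg u).congr_of_eventuallyEq ?_
    filter_upwards [Iio_mem_nhds hu] with v hv
    rw [min_eq_left hv.le]
  · rw [min_self, hb, ← hasDerivWithinAt_univ, ← Iic_union_Ici (a := u)]
    refine HasDerivWithinAt.union ?_ ?_
    · exact (hb ▸ hg u).hasDerivWithinAt.congr (fun v hv => by rw [min_eq_left hv])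
        (by rw [min_self])
    · exact (hasDerivWithinAt_const u _ (g u)).congr (fun v hv => by rw [min_eq_right hv])
        (by rw [min_self])
  · rw [min_eq_right hu.le, hb]
    refine (hasDerivAt_const u (g b)).congr_of_eventuallyEq ?_
    filter_upwards [Ioi_mem_nhds hu] with v hv
    rw [min_eq_right hv.le]

theorem hasDerivAt_comp_clamp (hab : a ≤ b) (hg : ∀ u, HasDerivAt g (g' u) u) (ha : g' a = 0)
    (hb : g' b = 0) (u : ℝ) :
    HasDerivAt (fun v => g (max a (min v b))) (g' (max a (min u b))) u :=
  hasDerivAt_comp_min_right (hasDerivAt_comp_max_left hg ha) (by rwa [max_eq_right hab]) u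

end ClampDeriv

noncomputable def smoothStep (u : ℝ) : ℝ := sin (π / 2 * max 0 (min u 1)) ^ 2

theorem hasDerivAt_sin_sq_half_pi_mul (u : ℝ) :
    HasDerivAt (fun v => sin (π / 2 * v) ^ 2) (π / 2 * sin (π * u)) u := by
  refine (((hasDerivAt_id' u).const_mul (π / 2)).sin.pow 2).congr_deriv ?_
  rw [show π * u = 2 * (π / 2 * u) by ring, sin_two_mul]
  push_cast
  ring

theorem hasDerivAt_smoothStep (u : ℝ) :
    HasDerivAt smoothStep (π / 2 * sin (π * max 0 (min u 1))) u :=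
  hasDerivAt_comp_clamp zero_le_one hasDerivAt_sin_sq_half_pi_mul (by simp) (by simp) u

theorem contDiff_smoothStep : ContDiff ℝ 1 smoothStep := by
  rw [contDiff_one_iff_deriv]
  refine ⟨fun u => (hasDerivAt_smoothStep u).differentiableAt, ?_⟩
  rw [funext fun u => (hasDerivAt_smoothStep u).deriv]
  fun_prop

theorem hasDerivAt_smoothStep_of_notMem_Ioo {u : ℝ} (hu : u ∉ Ioo 0 1) :
    HasDerivAt smoothStep 0 u := by
  convert hasDerivAt_smoothStep u using 1
  rcases le_or_gt u 0 with h | h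
  · simp [min_eq_left (h.trans zero_le_one), max_eq_left h]
  · simp [min_eq_right (le_of_not_gt fun h1 => hu ⟨h, h1⟩)]

theorem smoothStep_of_nonpos {u : ℝ} (hu : u ≤ 0) : smoothStep u = 0 := by
  simp [smoothStep, min_eq_left (hu.trans zero_le_one), max_eq_left hu]

theorem smoothStep_of_one_le {u : ℝ} (hu : 1 ≤ u) : smoothStep u = 1 := by
  simp [smoothStep, min_eq_right hu]

theorem smoothStep_of_mem_Icc {u : ℝ} (hu : u ∈ Icc 0 1) : smoothStep u = sin (π / 2 * u) ^ 2 := by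
  rw [smoothStep, min_eq_left hu.2, max_eq_right hu.1]

theorem exists_mem_Icc_succ {t : ℕ → ℝ} {s : ℝ} (h0 : s ≤ t 0) :
    ∀ m, t (m + 1) ≤ s → ∃ k ≤ m, s ∈ Icc (t (k + 1)) (t k)
  | 0, h => ⟨0, le_rfl, h, h0⟩
  | m + 1, h =>
    if hm : s ≤ t (m + 1) then ⟨m + 1, le_rfl, h, hm⟩
    else
      let ⟨k, hk, hs⟩ := exists_mem_Icc_succ h0 m (le_of_not_ge hm)
      ⟨k, hk.trans m.le_succ, hs⟩

section Ramp

variable {a b s : ℝ}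

theorem one_le_div_sub_of_le (hab : b < a) (hs : s ≤ b) : 1 ≤ (s - a) / (b - a) := by
  rw [le_div_iff_of_neg (by linarith)]
  linarith

theorem div_sub_nonpos_of_le (hab : b < a) (hs : a ≤ s) : (s - a) / (b - a) ≤ 0 :=
  div_nonpos_of_nonneg_of_nonpos (by linarith) (by linarith)

theorem div_sub_mem_Icc (hab : b < a) (hs : s ∈ Icc b a) : (s - a) / (b - a) ∈ Icc 0 1 :=
  ⟨div_nonneg_of_nonpos (by linarith [hs.2]) (by linarith),
    (div_le_one_of_neg (by linarith)).2 (by linarith [hs.1])⟩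

end Ramp

section Blend

variable {X E : Type*} [NormedAddCommGroup E] [NormedSpace ℝ E] {t : ℕ → ℝ} {F : ℕ → X → E} {L : ℕ}

noncomputable def blend (t : ℕ → ℝ) (F : ℕ → X → E) (L : ℕ) (x : X) (s : ℝ) : E :=
  F 0 x + ∑ j ∈ Finset.range L, smoothStep ((s - t j) / (t (j + 1) - t j)) • (F (j + 1) x - F j x)

theorem contDiff_blend [NormedAddCommGroup X] [NormedSpace ℝ X] (hF : ∀ j ≤ L, ContDiff ℝ 1 (F j)) :
    ContDiff ℝ 1 (fun p : X × ℝ => blend t F L p.1 p.2) := by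
  refine ((hF 0 L.zero_le).comp contDiff_fst).add (ContDiff.sum fun j hj => ?_)
  have hjL : j < L := Finset.mem_range.mp hj
  exact (contDiff_smoothStep.comp ((contDiff_snd.sub contDiff_const).div_const _)).smul
    (((hF (j + 1) hjL).comp contDiff_fst).sub ((hF j hjL.le).comp contDiff_fst))

theorem blend_eq_of_mem_Icc (ht : StrictAntiOn t (Iic L)) {k : ℕ} (hk : k < L) {s : ℝ}
    (hs : s ∈ Icc (t (k + 1)) (t k)) (x : X) :
    blend t F L x s =
      F k x + sin (π / 2 * ((s - t k) / (t (k + 1) - t k))) ^ 2 • (F (k + 1) x - F k x) := by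
  have hstep : ∀ j < L, t (j + 1) < t j := fun j hj =>
    ht (mem_Iic.2 hj.le) (mem_Iic.2 hj) j.lt_succ_self
  have hbefore : ∑ j ∈ Finset.range k,
      smoothStep ((s - t j) / (t (j + 1) - t j)) • (F (j + 1) x - F j x) = F k x - F 0 x := by
    rw [← Finset.sum_range_sub (fun j => F j x)]
    refine Finset.sum_congr rfl fun j hj => ?_
    have hjk : j + 1 ≤ k := Finset.mem_range.mp hj
    have hs' : s ≤ t (j + 1) :=
      hs.2.trans (ht.antitoneOn (mem_Iic.2 (by omega)) (mem_Iic.2 hk.le) hjk)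
    rw [smoothStep_of_one_le (one_le_div_sub_of_le (hstep j (by omega)) hs'), one_smul]
  have hafter : ∑ j ∈ Finset.Ico (k + 1) L,
      smoothStep ((s - t j) / (t (j + 1) - t j)) • (F (j + 1) x - F j x) = 0 := by
    refine Finset.sum_eq_zero fun j hj => ?_
    obtain ⟨hkj, hjL⟩ := Finset.mem_Ico.mp hj
    have hs' : t j ≤ s := (ht.antitoneOn (mem_Iic.2 hk) (mem_Iic.2 hjL.le) hkj).trans hs.1
    rw [smoothStep_of_nonpos (div_sub_nonpos_of_le (hstep j hjL) hs'), zero_smul]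
  rw [blend, ← Finset.sum_range_add_sum_Ico _ hk, Finset.sum_range_succ, hbefore, hafter,
    smoothStep_of_mem_Icc (div_sub_mem_Icc (hstep k hk) hs)]
  abel

theorem hasDerivAt_blend_node (ht : StrictAntiOn t (Iic L)) {ℓ : ℕ} (hℓ : ℓ ≤ L) (x : X) :
    HasDerivAt (blend t F L x) 0 (t ℓ) := by
  have hterm : ∀ j ∈ Finset.range L, HasDerivAt
      (fun s => smoothStep ((s - t j) / (t (j + 1) - t j)) • (F (j + 1) x - F j x)) 0 (t ℓ) := by
    intro j hj
    have hjL : j < L := Finset.mem_range.mp hj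
    have hstep : t (j + 1) < t j := ht (mem_Iic.2 hjL.le) (mem_Iic.2 hjL) j.lt_succ_self
    have hnode : (t ℓ - t j) / (t (j + 1) - t j) ∉ Ioo 0 1 := by
      rcases lt_or_ge j ℓ with hjℓ | hℓj
      · have := one_le_div_sub_of_le hstep
          (ht.antitoneOn (mem_Iic.2 hjL) (mem_Iic.2 hℓ) (Nat.succ_le_of_lt hjℓ))
        exact fun h => h.2.not_ge this
      · have := div_sub_nonpos_of_le hstep
          (ht.antitoneOn (mem_Iic.2 hℓ) (mem_Iic.2 hjL.le) hℓj)
        exact fun h => h.1.not_ge this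
    simpa using ((hasDerivAt_smoothStep_of_notMem_Ioo hnode).comp (t ℓ)
      (((hasDerivAt_id' (t ℓ)).sub_const (t j)).div_const _)).smul_const (F (j + 1) x - F j x)
  exact ((HasDerivAt.fun_sum hterm).const_add (F 0 x)).congr_deriv (by simp)

end Blend

theorem stmt_1_general
    (n N L : ℕ) (hL : 0 < L)
    (f : ℕ → EuclideanSpace ℝ (Fin n) → EuclideanSpace ℝ (Fin n))
    (hf : ∀ i < N, ContDiff ℝ 1 (f i))
    (q : ℕ → ℕ) (hqL : q L = N)
    (hqmono : ∀ ℓ < L, q ℓ < q (ℓ + 1))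
    (F : ℕ → EuclideanSpace ℝ (Fin n) → EuclideanSpace ℝ (Fin n))
    (hF0 : ∀ x, F 0 x = 0)
    (hF : ∀ ℓ, 1 ≤ ℓ → ℓ ≤ L → ∀ x,
      F ℓ x = (q ℓ : ℝ)⁻¹ • ∑ i ∈ Finset.range (q ℓ), f i x)
    (t : ℕ → ℝ) (ht0 : t 0 = 1) (htL : t L = 0)
    (htmono : ∀ ℓ < L, t (ℓ + 1) < t ℓ)
    (θ : ℕ → ℝ → ℝ)
    (hθ : ∀ ℓ s, θ ℓ s = Real.sin (π / 2 * ((s - t (ℓ - 1)) / (t ℓ - t (ℓ - 1)))) ^ 2)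
    (d : EuclideanSpace ℝ (Fin n) → ℝ → EuclideanSpace ℝ (Fin n))
    (hd : ∀ ℓ, 1 ≤ ℓ → ℓ ≤ L → ∀ s ∈ Icc (t ℓ) (t (ℓ - 1)), ∀ x,
      d x s = (1 - θ ℓ s) • F (ℓ - 1) x + θ ℓ s • F ℓ x)
    :
    ContDiffOn ℝ 1 (fun p : EuclideanSpace ℝ (Fin n) × ℝ => d p.1 p.2)
      (Set.univ ×ˢ Icc (0 : ℝ) 1) ∧
    ∀ ℓ, 1 ≤ ℓ → ℓ < L → ∀ x,
      HasDerivAt (fun s => d x s) 0 (t ℓ) ∧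
      ContinuousAt (deriv (fun s => d x s)) (t ℓ) := by
  have ht : StrictAntiOn t (Iic L) := strictAntiOn_Iic_of_succ_lt htmono
  have hq : StrictMonoOn q (Iic L) := strictMonoOn_Iic_of_lt_succ hqmono
  have hFsmooth : ∀ ℓ ≤ L, ContDiff ℝ 1 (F ℓ) := by
    intro ℓ hℓ
    rcases ℓ.eq_zero_or_pos with rfl | hℓ0
    · simpa [funext hF0] using contDiff_const
    rw [funext (hF ℓ hℓ0 hℓ)]
    refine (ContDiff.sum fun i hi => hf i ?_).const_smul _
    exact hqL ▸ (Finset.mem_range.mp hi).trans_le (hq.monotoneOn (mem_Iic.2 hℓ) self_mem_Iic hℓ)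
  have hd_eq : ∀ x, ∀ s ∈ Icc (0 : ℝ) 1, d x s = blend t F L x s := by
    intro x s hs
    obtain ⟨m, rfl⟩ : ∃ m, L = m + 1 := Nat.exists_eq_add_one.mpr hL
    obtain ⟨k, hkm, hks⟩ := exists_mem_Icc_succ (ht0 ▸ hs.2) m (htL ▸ hs.1)
    rw [blend_eq_of_mem_Icc ht (Nat.lt_succ_of_le hkm) hks,
      hd (k + 1) k.succ_pos (by omega) s hks x, hθ, Nat.add_sub_cancel]
    module
  have hblend := contDiff_blend (t := t) hFsmooth
  refine ⟨hblend.contDiffOn.congr fun p hp => hd_eq p.1 p.2 hp.2, fun ℓ hℓ1 hℓL x => ?_⟩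
  have hnode : t ℓ ∈ Ioo 0 1 := ⟨htL ▸ ht (mem_Iic.2 hℓL.le) self_mem_Iic hℓL,
    ht0 ▸ ht (mem_Iic.2 L.zero_le) (mem_Iic.2 hℓL.le) hℓ1⟩
  have hev : (fun s => d x s) =ᶠ[𝓝 (t ℓ)] blend t F L x :=
    eventually_of_mem (Ioo_mem_nhds hnode.1 hnode.2) fun s hs => hd_eq x s (Ioo_subset_Icc_self hs)
  exact ⟨(hasDerivAt_blend_node ht hℓL.le x).congr_of_eventuallyEq hev,
    ((hblend.comp (contDiff_const.prodMk contDiff_id)).continuous_deriv le_rfl).continuousAt.congr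
      hev.deriv.symm⟩

/-- d is C¹ on ℝⁿ × [0,1]; at each connection point t_ℓ (ℓ = 1,…,L−1) the
partial derivative of d with respect to t exists, is continuous, and equals 0. -/
theorem stmt_1
    (n N L : ℕ) (hn : 0 < n) (hN : 0 < N) (hL : 0 < L) (hLN : L ≤ N)
    (f : ℕ → EuclideanSpace ℝ (Fin n) → EuclideanSpace ℝ (Fin n))
    (hf : ∀ i < N, ContDiff ℝ 1 (f i))
    (q : ℕ → ℕ) (hq0 : q 0 = 0) (hqL : q L = N)
    (hqmono : ∀ ℓ < L, q ℓ < q (ℓ + 1))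
    (F : ℕ → EuclideanSpace ℝ (Fin n) → EuclideanSpace ℝ (Fin n))
    (hF0 : ∀ x, F 0 x = 0)
    (hF : ∀ ℓ, 1 ≤ ℓ → ℓ ≤ L → ∀ x,
      F ℓ x = (q ℓ : ℝ)⁻¹ • ∑ i ∈ Finset.range (q ℓ), f i x)
    (t : ℕ → ℝ) (ht0 : t 0 = 1) (htL : t L = 0)
    (htmono : ∀ ℓ < L, t (ℓ + 1) < t ℓ)
    (θ : ℕ → ℝ → ℝ)
    (hθ : ∀ ℓ s, θ ℓ s = Real.sin (π / 2 * ((s - t (ℓ - 1)) / (t ℓ - t (ℓ - 1)))) ^ 2)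
    (d : EuclideanSpace ℝ (Fin n) → ℝ → EuclideanSpace ℝ (Fin n))
    (hd : ∀ ℓ, 1 ≤ ℓ → ℓ ≤ L → ∀ s ∈ Icc (t ℓ) (t (ℓ - 1)), ∀ x,
      d x s = (1 - θ ℓ s) • F (ℓ - 1) x + θ ℓ s • F ℓ x)
    :
    ContDiffOn ℝ 1 (fun p : EuclideanSpace ℝ (Fin n) × ℝ => d p.1 p.2)
      (Set.univ ×ˢ Icc (0 : ℝ) 1) ∧
    ∀ ℓ, 1 ≤ ℓ → ℓ < L → ∀ x,
      HasDerivAt (fun s => d x s) 0 (t ℓ) ∧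
      ContinuousAt (deriv (fun s => d x s)) (t ℓ) :=
  stmt_1_general n N L hL f hf q hqL hqmono F hF0 hF t ht0 htL htmono θ hθ d hd
end

section
/- The homotopy mapping h(x,t) = (1 − t) d(x,t) + t (x − x⁰) is continuously differentiable from ℝ^n × [0,1] to ℝ^n. -/
/-!
On the slab `t_ℓ ≤ s ≤ t_{ℓ-1}` the curve `d(x, ·)` equals `F^{ℓ-1} + θ_ℓ (F^ℓ - F^{ℓ-1})`, and
`θ_ℓ(s) = φ((s - t_{ℓ-1}) / (t_ℓ - t_{ℓ-1}))` for the step `φ` which is `0` on `(-∞, 0]`,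
`sin²(πu/2)` on `[0, 1]` and `1` on `[1, ∞)`. This `φ` is `C¹` because the derivative
`(π/2) sin(πu)` of `sin²(πu/2)` vanishes at `0` and `1`. Hence for `s ∈ [0, 1]` the map `d`
agrees with the telescoping sum `∑_ℓ φ((s - t_{ℓ-1}) / (t_ℓ - t_{ℓ-1})) • (F^ℓ - F^{ℓ-1})`, and `h`
with the map obtained by putting this sum in place of `d`, which is `C¹` on all of `ℝⁿ × ℝ`.
-/

open Real Set Finset

noncomputable def sinSqSlope (v : ℝ) : ℝ := π / 2 * sin (π * projIcc 0 1 zero_le_one v)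

theorem continuous_sinSqSlope : Continuous sinSqSlope := by
  unfold sinSqSlope; fun_prop

theorem sinSqSlope_of_mem_Icc {v : ℝ} (hv : v ∈ Icc (0 : ℝ) 1) :
    sinSqSlope v = π / 2 * sin (π * v) := by
  rw [sinSqSlope, projIcc_of_mem _ hv]

theorem sinSqSlope_of_nonpos {v : ℝ} (hv : v ≤ 0) : sinSqSlope v = 0 := by
  simp [sinSqSlope, projIcc_of_le_left _ hv]

theorem sinSqSlope_of_one_le {v : ℝ} (hv : 1 ≤ v) : sinSqSlope v = 0 := by
  simp [sinSqSlope, projIcc_of_right_le _ hv]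

/-- A `C¹` step from `0` to `1`, equal to `sin²(πu/2)` on `[0, 1]`; defined as the primitive of its
continuous derivative so that its regularity comes for free. -/
noncomputable def sinSqStep (u : ℝ) : ℝ := ∫ v in (0 : ℝ)..u, sinSqSlope v

theorem hasDerivAt_sinSqStep (u : ℝ) : HasDerivAt sinSqStep (sinSqSlope u) u :=
  intervalIntegral.integral_hasDerivAt_right (continuous_sinSqSlope.intervalIntegrable _ _)
    (continuous_sinSqSlope.stronglyMeasurableAtFilter _ _) continuous_sinSqSlope.continuousAt

theorem contDiff_sinSqStep : ContDiff ℝ 1 sinSqStep := by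
  rw [contDiff_one_iff_deriv]
  refine ⟨fun u => (hasDerivAt_sinSqStep u).differentiableAt, ?_⟩
  rw [show deriv sinSqStep = sinSqSlope from funext fun u => (hasDerivAt_sinSqStep u).deriv]
  exact continuous_sinSqSlope

theorem hasDerivAt_sin_sq_pi_div_two_mul (w : ℝ) :
    HasDerivAt (fun w => sin (π / 2 * w) ^ 2) (π / 2 * sin (π * w)) w := by
  have h : HasDerivAt (fun w => sin (π / 2 * w) ^ 2)
      (2 * sin (π / 2 * w) * (cos (π / 2 * w) * (π / 2))) w := by
    simpa using ((hasDerivAt_id w).const_mul (π / 2)).sin.fun_pow 2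
  refine h.congr_deriv ?_
  rw [show π * w = 2 * (π / 2 * w) by ring, sin_two_mul]
  ring

theorem sinSqStep_of_mem_Icc {u : ℝ} (hu : u ∈ Icc (0 : ℝ) 1) :
    sinSqStep u = sin (π / 2 * u) ^ 2 := by
  have hslope : EqOn sinSqSlope (fun v => π / 2 * sin (π * v)) (uIcc 0 u) := fun v hv => by
    rw [uIcc_of_le hu.1] at hv
    exact sinSqSlope_of_mem_Icc ⟨hv.1, hv.2.trans hu.2⟩
  rw [sinSqStep, intervalIntegral.integral_congr hslope,
    intervalIntegral.integral_eq_sub_of_hasDerivAt (fun w _ => hasDerivAt_sin_sq_pi_div_two_mul w)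
      (by apply Continuous.intervalIntegrable; fun_prop)]
  simp

theorem sinSqStep_of_nonpos {u : ℝ} (hu : u ≤ 0) : sinSqStep u = 0 := by
  have hslope : EqOn sinSqSlope 0 (uIcc 0 u) := fun v hv => by
    rw [uIcc_of_ge hu] at hv
    exact sinSqSlope_of_nonpos hv.2
  rw [sinSqStep, intervalIntegral.integral_congr hslope, Pi.zero_def,
    intervalIntegral.integral_zero]

theorem sinSqStep_of_one_le {u : ℝ} (hu : 1 ≤ u) : sinSqStep u = 1 := by
  have hslope : EqOn sinSqSlope 0 (uIcc 1 u) := fun v hv => by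
    rw [uIcc_of_le hu] at hv
    exact sinSqSlope_of_one_le hv.1
  have hone : sinSqStep 1 = 1 := by
    simp [sinSqStep_of_mem_Icc (right_mem_Icc.2 zero_le_one)]
  rw [sinSqStep, ← intervalIntegral.integral_add_adjacent_intervals
      (continuous_sinSqSlope.intervalIntegrable 0 1) (continuous_sinSqSlope.intervalIntegrable 1 u),
    intervalIntegral.integral_congr hslope, Pi.zero_def, intervalIntegral.integral_zero, add_zero]
  exact hone

theorem Finset.sum_range_smul_sub_of_step {M : Type*} [AddCommGroup M] [Module ℝ M]
    (a : ℕ → M) (c : ℕ → ℝ) {k L : ℕ} (hk : k < L) (hbelow : ∀ i < k, c i = 1)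
    (habove : ∀ i, k < i → i < L → c i = 0) :
    ∑ i ∈ range L, c i • (a (i + 1) - a i) = a k - a 0 + c k • (a (k + 1) - a k) := by
  have hvanish : ∑ i ∈ range L, c i • (a (i + 1) - a i)
      = ∑ i ∈ range (k + 1), c i • (a (i + 1) - a i) := by
    refine (sum_subset (range_subset_range.2 hk) fun i hiL hik => ?_).symm
    simp only [mem_range, not_lt] at hiL hik
    rw [habove i hik hiL, zero_smul]
  have htelescope : ∑ i ∈ range k, c i • (a (i + 1) - a i) = a k - a 0 := by
    rw [← sum_range_sub a]
    exact sum_congr rfl fun i hi => by rw [hbelow i (mem_range.1 hi), one_smul]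
  rw [hvanish, sum_range_succ, htelescope]

theorem exists_mem_Icc_succ_of_mem_Icc (t : ℕ → ℝ) {L : ℕ} (hL : 0 < L) {s : ℝ}
    (hs : s ∈ Icc (t L) (t 0)) : ∃ k < L, s ∈ Icc (t (k + 1)) (t k) := by
  induction L with
  | zero => exact absurd hL (lt_irrefl 0)
  | succ L ih =>
    by_cases hsL : s ≤ t L
    · exact ⟨L, lt_add_one L, hs.1, hsL⟩
    · have hL0 : 0 < L := Nat.pos_of_ne_zero fun h => hsL (h ▸ hs.2)
      obtain ⟨k, hk, hks⟩ := ih hL0 ⟨(not_le.1 hsL).le, hs.2⟩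
      exact ⟨k, hk.trans (lt_add_one L), hks⟩

noncomputable def sinSqInterp {E M : Type*} [AddCommGroup M] [Module ℝ M] (t : ℕ → ℝ)
    (g : ℕ → E → M) (L : ℕ) (x : E) (s : ℝ) : M :=
  ∑ i ∈ range L, sinSqStep ((s - t i) / (t (i + 1) - t i)) • (g (i + 1) x - g i x)

theorem sinSqInterp_eq_of_mem_Icc {E M : Type*} [AddCommGroup M] [Module ℝ M] {t : ℕ → ℝ}
    (g : ℕ → E → M) {L k : ℕ}
    (ht : ∀ i < L, t (i + 1) < t i) (hk : k < L) (x : E) {s : ℝ}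
    (hs : s ∈ Icc (t (k + 1)) (t k)) :
    sinSqInterp t g L x s = g k x - g 0 x
      + sin (π / 2 * ((s - t k) / (t (k + 1) - t k))) ^ 2 • (g (k + 1) x - g k x) := by
  have hanti : StrictAntiOn t (Set.Iic L) := strictAntiOn_Iic_of_succ_lt ht
  have hgap : ∀ i < L, t (i + 1) - t i < 0 := fun i hi => sub_neg.2 (ht i hi)
  rw [sinSqInterp, sum_range_smul_sub_of_step (fun i => g i x) _ hk, sinSqStep_of_mem_Icc]
  · exact ⟨div_nonneg_of_nonpos (by linarith [hs.2]) (hgap k hk).le,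
      (div_le_one_of_neg (hgap k hk)).2 (by linarith [hs.1])⟩
  · intro i hik
    refine sinSqStep_of_one_le ((one_le_div_of_neg (hgap i (hik.trans hk))).2 ?_)
    have : t k ≤ t (i + 1) :=
      hanti.antitoneOn (Set.mem_Iic.2 (hik.trans hk)) (Set.mem_Iic.2 hk.le) hik
    linarith [hs.2]
  · intro i hki hiL
    refine sinSqStep_of_nonpos (div_nonpos_of_nonneg_of_nonpos ?_ (hgap i hiL).le)
    have : t i ≤ t (k + 1) := hanti.antitoneOn (Set.mem_Iic.2 hk) (Set.mem_Iic.2 hiL.le) hki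
    linarith [hs.1]

theorem contDiff_sinSqInterp {E E' : Type*} [NormedAddCommGroup E] [NormedSpace ℝ E]
    [NormedAddCommGroup E'] [NormedSpace ℝ E'] (t : ℕ → ℝ) {g : ℕ → E → E'} {L : ℕ}
    (hg : ∀ i ≤ L, ContDiff ℝ 1 (g i)) :
    ContDiff ℝ 1 fun p : E × ℝ => sinSqInterp t g L p.1 p.2 := by
  refine ContDiff.sum fun i hi => ?_
  have hiL := mem_range.1 hi
  exact (contDiff_sinSqStep.comp ((contDiff_snd.sub contDiff_const).div_const _)).smul
    (((hg (i + 1) hiL).comp contDiff_fst).sub ((hg i hiL.le).comp contDiff_fst))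

theorem stmt_2_general
    (n N L : ℕ) (hL : 0 < L)
    (f : ℕ → EuclideanSpace ℝ (Fin n) → EuclideanSpace ℝ (Fin n))
    (hf : ∀ i < N, ContDiff ℝ 1 (f i))
    (q : ℕ → ℕ) (hqL : q L = N)
    (hqmono : ∀ ℓ < L, q ℓ < q (ℓ + 1))
    (F : ℕ → EuclideanSpace ℝ (Fin n) → EuclideanSpace ℝ (Fin n))
    (hF0 : ∀ x, F 0 x = 0)
    (hF : ∀ ℓ, 1 ≤ ℓ → ℓ ≤ L → ∀ x,
      F ℓ x = (q ℓ : ℝ)⁻¹ • ∑ i ∈ Finset.range (q ℓ), f i x)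
    (t : ℕ → ℝ) (ht0 : t 0 = 1) (htL : t L = 0)
    (htmono : ∀ ℓ < L, t (ℓ + 1) < t ℓ)
    (θ : ℕ → ℝ → ℝ)
    (hθ : ∀ ℓ s, θ ℓ s = Real.sin (π / 2 * ((s - t (ℓ - 1)) / (t ℓ - t (ℓ - 1)))) ^ 2)
    (d : EuclideanSpace ℝ (Fin n) → ℝ → EuclideanSpace ℝ (Fin n))
    (hd : ∀ ℓ, 1 ≤ ℓ → ℓ ≤ L → ∀ s ∈ Icc (t ℓ) (t (ℓ - 1)), ∀ x,
      d x s = (1 - θ ℓ s) • F (ℓ - 1) x + θ ℓ s • F ℓ x)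
    (x0 : EuclideanSpace ℝ (Fin n))
    (h : EuclideanSpace ℝ (Fin n) → ℝ → EuclideanSpace ℝ (Fin n))
    (hh : ∀ x s, h x s = (1 - s) • d x s + s • (x - x0))
    :
    ContDiffOn ℝ 1 (fun p : EuclideanSpace ℝ (Fin n) × ℝ => h p.1 p.2)
      (Set.univ ×ˢ Icc (0 : ℝ) 1) := by
  have hqN : ∀ ℓ ≤ L, q ℓ ≤ N := fun ℓ hℓ => hqL ▸
    (strictMonoOn_Iic_of_lt_succ hqmono).monotoneOn (Set.mem_Iic.2 hℓ) (Set.mem_Iic.2 le_rfl) hℓ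
  have hFC : ∀ ℓ ≤ L, ContDiff ℝ 1 (F ℓ) := by
    intro ℓ hℓ
    rcases Nat.eq_zero_or_pos ℓ with rfl | hℓ0
    · rw [funext hF0]
      exact contDiff_const
    · rw [funext (hF ℓ hℓ0 hℓ)]
      exact ContDiff.const_smul _
        (ContDiff.sum fun i hi => hf i ((mem_range.1 hi).trans_le (hqN ℓ hℓ)))
  have hG : ContDiff ℝ 1 fun p : EuclideanSpace ℝ (Fin n) × ℝ =>
      (1 - p.2) • sinSqInterp t F L p.1 p.2 + p.2 • (p.1 - x0) :=
    ((contDiff_const.sub contDiff_snd).smul (contDiff_sinSqInterp t hFC)).add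
      (contDiff_snd.smul (contDiff_fst.sub contDiff_const))
  refine hG.contDiffOn.congr ?_
  rintro ⟨x, s⟩ ⟨-, hs⟩
  obtain ⟨k, hk, hks⟩ := exists_mem_Icc_succ_of_mem_Icc t hL (htL ▸ ht0 ▸ hs)
  have hdk : d x s = (1 - θ (k + 1) s) • F k x + θ (k + 1) s • F (k + 1) x := by
    simpa using hd (k + 1) k.succ_pos hk s (by simpa using hks) x
  rw [hh, hdk, hθ, sinSqInterp_eq_of_mem_Icc F htmono hk x hks, hF0, Nat.add_sub_cancel]
  module

/-- h(x,t) = (1 − t) d(x,t) + t (x − x⁰) is continuously differentiable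
from ℝⁿ × [0,1] to ℝⁿ. -/
theorem stmt_2
    (n N L : ℕ) (hn : 0 < n) (hN : 0 < N) (hL : 0 < L) (hLN : L ≤ N)
    (f : ℕ → EuclideanSpace ℝ (Fin n) → EuclideanSpace ℝ (Fin n))
    (hf : ∀ i < N, ContDiff ℝ 1 (f i))
    (q : ℕ → ℕ) (hq0 : q 0 = 0) (hqL : q L = N)
    (hqmono : ∀ ℓ < L, q ℓ < q (ℓ + 1))
    (F : ℕ → EuclideanSpace ℝ (Fin n) → EuclideanSpace ℝ (Fin n))
    (hF0 : ∀ x, F 0 x = 0)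
    (hF : ∀ ℓ, 1 ≤ ℓ → ℓ ≤ L → ∀ x,
      F ℓ x = (q ℓ : ℝ)⁻¹ • ∑ i ∈ Finset.range (q ℓ), f i x)
    (t : ℕ → ℝ) (ht0 : t 0 = 1) (htL : t L = 0)
    (htmono : ∀ ℓ < L, t (ℓ + 1) < t ℓ)
    (θ : ℕ → ℝ → ℝ)
    (hθ : ∀ ℓ s, θ ℓ s = Real.sin (π / 2 * ((s - t (ℓ - 1)) / (t ℓ - t (ℓ - 1)))) ^ 2)
    (d : EuclideanSpace ℝ (Fin n) → ℝ → EuclideanSpace ℝ (Fin n))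
    (hd : ∀ ℓ, 1 ≤ ℓ → ℓ ≤ L → ∀ s ∈ Icc (t ℓ) (t (ℓ - 1)), ∀ x,
      d x s = (1 - θ ℓ s) • F (ℓ - 1) x + θ ℓ s • F ℓ x)
    (x0 : EuclideanSpace ℝ (Fin n))
    (h : EuclideanSpace ℝ (Fin n) → ℝ → EuclideanSpace ℝ (Fin n))
    (hh : ∀ x s, h x s = (1 - s) • d x s + s • (x - x0))
    :
    ContDiffOn ℝ 1 (fun p : EuclideanSpace ℝ (Fin n) × ℝ => h p.1 p.2)
      (Set.univ ×ˢ Icc (0 : ℝ) 1) :=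
  stmt_2_general n N L hL f hf q hqL hqmono F hF0 hF t ht0 htL htmono θ hθ d hd x0 h hh
end

section
/- Under Assumption 1, for every t ∈ [0,1] and every x ∉ int(X) one has (x − x⁰)ᵀ h(x,t) > 0, where h(x,t) = (1 − t) d(x,t) + t (x − x⁰). -/
open Real Set RealInnerProductSpace

/-- Under Assumption 1, for every t ∈ [0,1] and every x ∉ int(X) one has
(x − x⁰)ᵀ h(x,t) > 0, where h(x,t) = (1 − t) d(x,t) + t (x − x⁰). -/
theorem stmt_4
    (n N L : ℕ) (hn : 0 < n) (hN : 0 < N) (hL : 0 < L) (hLN : L ≤ N)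
    (f : ℕ → EuclideanSpace ℝ (Fin n) → EuclideanSpace ℝ (Fin n))
    (hf : ∀ i < N, ContDiff ℝ 1 (f i))
    (q : ℕ → ℕ) (hq0 : q 0 = 0) (hqL : q L = N)
    (hqmono : ∀ ℓ < L, q ℓ < q (ℓ + 1))
    (F : ℕ → EuclideanSpace ℝ (Fin n) → EuclideanSpace ℝ (Fin n))
    (hF0 : ∀ x, F 0 x = 0)
    (hF : ∀ ℓ, 1 ≤ ℓ → ℓ ≤ L → ∀ x,
      F ℓ x = (q ℓ : ℝ)⁻¹ • ∑ i ∈ Finset.range (q ℓ), f i x)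
    (t : ℕ → ℝ) (ht0 : t 0 = 1) (htL : t L = 0)
    (htmono : ∀ ℓ < L, t (ℓ + 1) < t ℓ)
    (θ : ℕ → ℝ → ℝ)
    (hθ : ∀ ℓ s, θ ℓ s = Real.sin (π / 2 * ((s - t (ℓ - 1)) / (t ℓ - t (ℓ - 1)))) ^ 2)
    (d : EuclideanSpace ℝ (Fin n) → ℝ → EuclideanSpace ℝ (Fin n))
    (hd : ∀ ℓ, 1 ≤ ℓ → ℓ ≤ L → ∀ s ∈ Icc (t ℓ) (t (ℓ - 1)), ∀ x,
      d x s = (1 - θ ℓ s) • F (ℓ - 1) x + θ ℓ s • F ℓ x)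
    (x0 : EuclideanSpace ℝ (Fin n))
    (h : EuclideanSpace ℝ (Fin n) → ℝ → EuclideanSpace ℝ (Fin n))
    (hh : ∀ x s, h x s = (1 - s) • d x s + s • (x - x0))
    (X : Set (EuclideanSpace ℝ (Fin n))) (hXc : IsCompact X) (hXconv : Convex ℝ X)
    (hXint : (interior X).Nonempty) (hx0 : x0 ∈ interior X)
    (ha1 : ∀ i < N, ∀ x ∉ interior X, 0 < ⟪x - x0, f i x⟫)
    :
    ∀ s ∈ Icc (0 : ℝ) 1, ∀ x ∉ interior X, 0 < ⟪x - x0, h x s⟫ := by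
  classical
  -- strict antitonicity of t
  have tanti : ∀ a b, a < b → b ≤ L → t b < t a := by
    intro a b hab hbL
    induction b with
    | zero => omega
    | succ b ih =>
      rcases Nat.lt_succ_iff_lt_or_eq.mp hab with h' | h'
      · exact lt_trans (htmono b (by omega)) (ih h' (by omega))
      · subst h'; exact htmono a (by omega)
  -- monotonicity of q
  have qmono : ∀ a b, a ≤ b → b ≤ L → q a ≤ q b := by
    intro a b hab hbL
    induction b with
    | zero => exact Nat.le_zero.mp hab ▸ le_refl _
    | succ b ih =>
      rcases Nat.lt_succ_iff_lt_or_eq.mp (Nat.lt_succ_of_le hab) with h' | h'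
      · exact le_trans (ih (by omega) (by omega)) (le_of_lt (hqmono b (by omega)))
      · subst h'; exact le_refl _
  intro s hs x hx
  have hne : x ≠ x0 := fun hxx => hx (hxx ▸ hx0)
  have hself : (0:ℝ) < ⟪x - x0, x - x0⟫ := by
    rw [real_inner_self_eq_norm_sq]
    have : ‖x - x0‖ ≠ 0 := norm_ne_zero_iff.mpr (sub_ne_zero.mpr hne)
    positivity
  have hFpos : ∀ ℓ, 1 ≤ ℓ → ℓ ≤ L → 0 < ⟪x - x0, F ℓ x⟫ := by
    intro ℓ h1 hℓ
    rw [hF ℓ h1 hℓ x, inner_smul_right, inner_sum]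
    have hqpos : 0 < q ℓ := by
      have h1' : 0 < q 1 := by simpa [hq0] using hqmono 0 (by omega)
      have h2' := qmono 1 ℓ h1 hℓ
      omega
    have : (0:ℝ) < ∑ i ∈ Finset.range (q ℓ), ⟪x - x0, f i x⟫ := by
      apply Finset.sum_pos
      · intro i hi
        apply ha1 i _ x hx
        have h3' := qmono ℓ L hℓ (le_refl L)
        have h4' := Finset.mem_range.mp hi
        omega
      · exact Finset.nonempty_range_iff.mpr (by omega)
    positivity
  have hFnonneg : ∀ ℓ, ℓ ≤ L → 0 ≤ ⟪x - x0, F ℓ x⟫ := by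
    intro ℓ hℓ
    rcases Nat.eq_zero_or_pos ℓ with h0 | h1
    · subst h0; rw [hF0]; simp
    · exact le_of_lt (hFpos ℓ h1 hℓ)
  rw [hh]
  rcases eq_or_lt_of_le hs.2 with hs1 | hs1
  · -- s = 1
    subst hs1
    simp only [sub_self, zero_smul, one_smul, zero_add]
    exact hself
  -- s < 1 : find ℓ with t ℓ ≤ s < t (ℓ - 1)
  have hex : ∃ ℓ, t ℓ ≤ s := ⟨L, by rw [htL]; exact hs.1⟩
  set ℓ := Nat.find hex with hℓdef
  have hℓle : t ℓ ≤ s := Nat.find_spec hex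
  have hℓL : ℓ ≤ L := Nat.find_min' hex (by rw [htL]; exact hs.1)
  have hℓ1 : 1 ≤ ℓ := by
    rcases Nat.eq_zero_or_pos ℓ with h0 | h1
    · exfalso
      have : t 0 ≤ s := h0 ▸ hℓle
      rw [ht0] at this; linarith
    · exact h1
  have hlt : s < t (ℓ - 1) := by
    have := Nat.find_min hex (show ℓ - 1 < ℓ by omega)
    linarith [not_le.mp this]
  have hmem : s ∈ Icc (t ℓ) (t (ℓ - 1)) := ⟨hℓle, le_of_lt hlt⟩
  rw [hd ℓ hℓ1 hℓL s hmem x]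
  have hθ01 : 0 ≤ θ ℓ s ∧ θ ℓ s ≤ 1 := by
    rw [hθ]; exact ⟨sq_nonneg _, Real.sin_sq_le_one _⟩
  have hA := hFnonneg (ℓ - 1) (by omega)
  have hB := hFpos ℓ hℓ1 hℓL
  have hdnn : 0 ≤ ⟪x - x0, (1 - θ ℓ s) • F (ℓ - 1) x + θ ℓ s • F ℓ x⟫ := by
    rw [inner_add_right, inner_smul_right, inner_smul_right]
    have := hθ01.1; have := hθ01.2
    nlinarith
  rw [inner_add_right, inner_smul_right, inner_smul_right]
  rcases eq_or_lt_of_le hs.1 with hs0 | hs0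
  · -- s = 0 : then ℓ = L and θ = 1
    have hℓL' : ℓ = L := by
      by_contra hne'
      have : t L < t ℓ := tanti ℓ L (by omega) (le_refl L)
      rw [htL] at this; linarith
    have hθ1 : θ ℓ s = 1 := by
      rw [hθ, hℓL', ← hs0, htL]
      have htpos : 0 < t (L - 1) := by
        have := tanti (L - 1) L (by omega) (le_refl L)
        rw [htL] at this; linarith
      rw [zero_sub]
      rw [div_self (neg_ne_zero.mpr (ne_of_gt htpos))]
      simp [Real.sin_pi_div_two]
    rw [hθ1, ← hs0, hℓL']
    simp only [sub_zero, sub_self, zero_mul, one_mul, zero_smul, zero_add, mul_zero, add_zero,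
      one_smul, zero_add, inner_smul_right]
    have := hFpos L hL (le_refl L)
    linarith
  · -- 0 < s < 1
    nlinarith [hθ01.1, hθ01.2]
end
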